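/- arXiv:1009.2801 — 6 statements merged into one kernel-verified Lean document; each statement's English description precedes it below -/
import Mathlib

section
/- Let p > 1 and 0 ≤ γ < 1 − 1/p. Then the double series Σ over integer pairs (j,k) with 2j ≠ ±k of 1 / ( (2|j| + |k|)^{(1−γ)p} · |2|j| − |k||^p ) converges, where the sum excludes pairs with 2|j| = |k|. -/
/-!
Away from the excluded pairs, `2|j| + |k| ≥ |j + 1/2|`, so with `s = (1 - γ)p > 1` each term is
at most `|j + 1/2|^(-s) · |2|j| - |k||^(-p)`. For fixed `j`, the map `k ↦ 2|j| - |k|` is at most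
two-to-one, so this majorant is bounded by two shears of the product of the convergent series
`∑ |j + 1/2|^(-s)` and `∑ |d|^(-p)`.
-/

theorem Summable.mul_comp_sub_abs {ι : Type*} {a : ι → ℝ} {b : ℤ → ℝ} (ha : Summable a)
    (hb : Summable b) (ha0 : 0 ≤ a) (hb0 : 0 ≤ b) (c : ι → ℤ) :
    Summable fun jk : ι × ℤ => a jk.1 * b (c jk.1 - |jk.2|) := by
  have shear (e : ι → ℤ ≃ ℤ) : Summable fun jk : ι × ℤ => a jk.1 * b (e jk.1 jk.2) :=
    (ha.mul_of_nonneg hb ha0 hb0).comp_injective (Equiv.prodShear (.refl ι) e).injective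
  refine .of_nonneg_of_le (fun _ => mul_nonneg (ha0 _) (hb0 _)) (fun jk => ?_)
    ((shear fun j => Equiv.subLeft (c j)).add (shear fun j => Equiv.addLeft (c j)))
  have := mul_nonneg (ha0 jk.1) (hb0 (c jk.1 - jk.2))
  have := mul_nonneg (ha0 jk.1) (hb0 (c jk.1 + jk.2))
  rcases abs_choice jk.2 with h | h <;> simp only [h, sub_neg_eq_add, Equiv.subLeft_apply,
    Equiv.coe_addLeft] <;> linarith

theorem abs_add_half_le_two_mul_abs_add_abs {j k : ℤ} (h : 2 * |j| ≠ |k|) :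
    |(j : ℝ) + 1 / 2| ≤ ((2 * |j| + |k| : ℤ) : ℝ) := by
  have hk := abs_nonneg k
  have hj : j + 1 ≤ 2 * |j| + |k| ∧ -j ≤ 2 * |j| + |k| := by
    rcases le_total 0 j with hj | hj
    · rw [abs_of_nonneg hj] at h ⊢; omega
    · rw [abs_of_nonpos hj] at h ⊢; omega
  obtain ⟨hj1, hj2⟩ :
      ((j : ℝ) + 1 ≤ (2 * |j| + |k| : ℤ)) ∧ (-(j : ℝ) ≤ (2 * |j| + |k| : ℤ)) := by
    exact_mod_cast hj
  rw [abs_le]; constructor <;> linarith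

theorem stmt2_general (p γ : ℝ) (hp : 1 < p) (hγ : γ < 1 - 1 / p) :
    Summable (fun jk : ℤ × ℤ =>
      if 2 * |jk.1| = |jk.2| then (0 : ℝ)
      else 1 / (((2 * |jk.1| + |jk.2| : ℤ) : ℝ) ^ ((1 - γ) * p) *
        ((abs (2 * |jk.1| - |jk.2|) : ℤ) : ℝ) ^ p)) := by
  set s := (1 - γ) * p
  have hs : 1 < s := by
    have := mul_lt_mul_of_pos_right (show 1 / p < 1 - γ by linarith) (zero_lt_one.trans hp)
    rwa [one_div_mul_cancel (by positivity)] at this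
  have ha := (Real.summable_one_div_int_add_rpow (1 / 2) s).mpr hs
  have hb : Summable fun d : ℤ => 1 / |(d : ℝ)| ^ p := by
    simpa using (Real.summable_one_div_int_add_rpow 0 p).mpr hp
  refine .of_nonneg_of_le (fun jk => by split_ifs <;> positivity) (fun ⟨j, k⟩ => ?_)
    (ha.mul_comp_sub_abs hb (fun _ => by positivity) (fun _ => by positivity) fun j => 2 * |j|)
  dsimp only
  split_ifs with h
  · positivity
  rw [Int.cast_abs, ← one_div_mul_one_div]
  have hhalf : 0 < |(j : ℝ) + 1 / 2| := abs_pos.mpr fun h0 => by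
    have : 2 * j + 1 = 0 := by exact_mod_cast (by linarith : (2 * j + 1 : ℝ) = 0)
    omega
  gcongr
  exact abs_add_half_le_two_mul_abs_add_abs h

/-- For p > 1 and 0 ≤ γ < 1 − 1/p, the series
Σ_{(j,k), 2|j| ≠ |k|} 1/((2|j|+|k|)^{(1−γ)p} · |2|j|−|k||^p) converges. -/
theorem stmt2 (p γ : ℝ) (hp : 1 < p) (hγ0 : 0 ≤ γ) (hγ : γ < 1 - 1 / p) :
    Summable (fun jk : ℤ × ℤ =>
      if 2 * |jk.1| = |jk.2| then (0 : ℝ)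
      else 1 / (((2 * |jk.1| + |jk.2| : ℤ) : ℝ) ^ ((1 - γ) * p) *
        ((abs (2 * |jk.1| - |jk.2|) : ℤ) : ℝ) ^ p)) :=
  stmt2_general p γ hp hγ
end

section
/- Let 1 < p ≤ 2 and q the conjugate exponent (1/p + 1/q = 1). Suppose (f̂(j,k)) ∈ l^q(ℤ×ℤ) with f̂(j,k) = 0 whenever 2j = ±k, and define û(j,k) = f̂(j,k)/(4j² − k²) for 2j ≠ ±k. Then for any 0 < γ < 1 − 1/p, the function u(x,t) = Σ_{2j≠±k} û(j,k) e^{2ijx} e^{ikt} belongs to the Hölder space C^γ on [0,π] × [0,2π], and ‖u‖_{C^γ} ≤ C(γ,p) ‖f̂‖_{l^q}. -/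
/-!
With the weight `W_s(j,k) = (2|j| + |k|)^s / |4j² - k²|`, Hölder's inequality gives
`∑ |û(j,k)| (2|j| + |k|)^s ≤ ‖W_s‖_p ‖f̂‖_q`, and `W_s ∈ ℓ^p` as soon as `s < 1 - 1/p`: in the
coordinates `a = 2j - k`, `b = 2j + k` one has `4j² - k² = ab` and `2|j| + |k| = max |a| |b|`, so
`W_s ≤ |a|^(s-1) |b|^(-1) + |a|^(-1) |b|^(s-1)`, a sum of products of one-dimensional `p`-summable
sequences. Taking `s = 0` bounds `u` uniformly; taking `s = γ` bounds its Hölder quotient, because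
`|e^{iα} - e^{iβ}| ≤ 2 |α - β|^γ` and the phase `2jx + kt` is `(2|j| + |k|)`-Lipschitz.
-/

open scoped Real NNReal
open Complex

theorem norm_exp_I_mul_sub_exp_I_mul_le_rpow {γ : ℝ} (hγ0 : 0 ≤ γ) (hγ1 : γ ≤ 1) (α β : ℝ) :
    ‖exp (I * α) - exp (I * β)‖ ≤ 2 * |α - β| ^ γ := by
  have hfactor : exp (I * α) - exp (I * β) = exp (I * β) * (exp (I * ↑(α - β)) - 1) := by
    rw [mul_sub, mul_one, ← Complex.exp_add]
    push_cast
    ring_nf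
  have hchord : ‖exp (I * α) - exp (I * β)‖ ≤ |α - β| := by
    rw [hfactor, norm_mul, norm_exp_I_mul_ofReal, one_mul, ← Real.norm_eq_abs]
    exact Real.norm_exp_I_mul_ofReal_sub_one_le
  have hdiam : ‖exp (I * α) - exp (I * β)‖ ≤ 2 :=
    (norm_sub_le _ _).trans (by rw [norm_exp_I_mul_ofReal, norm_exp_I_mul_ofReal]; norm_num)
  rcases le_total |α - β| 1 with hle | hge
  · linarith [Real.self_le_rpow_of_le_one (abs_nonneg (α - β)) hle hγ1, abs_nonneg (α - β)]
  · linarith [Real.one_le_rpow hge hγ0]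

theorem holderWith_of_dist_le {X Y : Type*} [PseudoMetricSpace X] [PseudoMetricSpace Y]
    {f : X → Y} {C γ : ℝ} (hγ : 0 ≤ γ) (h : ∀ x y, dist (f x) (f y) ≤ C * dist x y ^ γ) :
    HolderWith C.toNNReal γ.toNNReal f := by
  intro x y
  rw [edist_dist, edist_dist, Real.coe_toNNReal γ hγ, ENNReal.ofReal_rpow_of_nonneg dist_nonneg hγ]
  change _ ≤ ENNReal.ofReal C * _
  rw [← ENNReal.ofReal_mul' (by positivity)]
  exact ENNReal.ofReal_le_ofReal (h x y)

theorem lipschitzWith_mul_fst_add_mul_snd (a b : ℝ) :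
    LipschitzWith (‖a‖₊ + ‖b‖₊) fun z : ℝ × ℝ => a * z.1 + b * z.2 := by
  have h := ((lipschitzWith_smul a).comp (LipschitzWith.prod_fst (α := ℝ) (β := ℝ))).add
    ((lipschitzWith_smul b).comp (LipschitzWith.prod_snd (α := ℝ) (β := ℝ)))
  simpa using h

section TrigonometricSeries

variable {ι X : Type*} {c : ι → ℂ} {θ : ι → X → ℝ}

theorem summable_mul_exp_I_mul (hc : Summable fun i => ‖c i‖) (z : X) :
    Summable fun i => c i * exp (I * θ i z) :=
  hc.of_norm_bounded fun i => by rw [norm_mul, norm_exp_I_mul_ofReal, mul_one]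

theorem norm_tsum_mul_exp_I_mul_le (hc : Summable fun i => ‖c i‖) (z : X) :
    ‖∑' i, c i * exp (I * θ i z)‖ ≤ ∑' i, ‖c i‖ :=
  tsum_of_norm_bounded hc.hasSum fun i => by rw [norm_mul, norm_exp_I_mul_ofReal, mul_one]

theorem dist_tsum_mul_exp_I_mul_le [PseudoMetricSpace X] {L : ι → ℝ≥0}
    (hθ : ∀ i, LipschitzWith (L i) (θ i)) {γ : ℝ} (hγ0 : 0 ≤ γ) (hγ1 : γ ≤ 1)
    (hc : Summable fun i => ‖c i‖)
    (hcL : Summable fun i => ‖c i‖ * (L i : ℝ) ^ γ) (z w : X) :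
    dist (∑' i, c i * exp (I * θ i z)) (∑' i, c i * exp (I * θ i w))
      ≤ 2 * (∑' i, ‖c i‖ * (L i : ℝ) ^ γ) * dist z w ^ γ := by
  rw [dist_eq_norm, ← (summable_mul_exp_I_mul hc z).tsum_sub (summable_mul_exp_I_mul hc w)]
  refine (tsum_of_norm_bounded ((hcL.hasSum.mul_right (dist z w ^ γ)).mul_left 2)
    fun i => ?_).trans_eq (by ring)
  have hθi : |θ i z - θ i w| ≤ L i * dist z w := by
    rw [← Real.dist_eq]; exact (hθ i).dist_le_mul z w
  calc ‖c i * exp (I * θ i z) - c i * exp (I * θ i w)‖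
      = ‖c i‖ * ‖exp (I * θ i z) - exp (I * θ i w)‖ := by rw [← mul_sub, norm_mul]
    _ ≤ ‖c i‖ * (2 * |θ i z - θ i w| ^ γ) := by
      gcongr; exact norm_exp_I_mul_sub_exp_I_mul_le_rpow hγ0 hγ1 _ _
    _ ≤ ‖c i‖ * (2 * (L i * dist z w) ^ γ) := by gcongr
    _ = 2 * (‖c i‖ * (L i : ℝ) ^ γ * dist z w ^ γ) := by
      rw [Real.mul_rpow (by positivity) dist_nonneg]; ring

end TrigonometricSeries

theorem abs_add_abs_eq_max_abs_sub_abs_add (x y : ℝ) : |x| + |y| = max |x - y| |x + y| := by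
  refine le_antisymm ?_ (max_le (abs_sub _ _) (abs_add_le _ _))
  rcases le_total 0 x with hx | hx <;> rcases le_total 0 y with hy | hy
  all_goals grind [abs_of_nonneg, abs_of_nonpos, le_max_iff, le_abs]

theorem summable_abs_int_rpow_mul_abs_int_rpow {s t : ℝ} (hs : 1 < s) (ht : 1 < t) :
    Summable fun ab : ℤ × ℤ => |(ab.1 : ℝ)| ^ (-s) * |(ab.2 : ℝ)| ^ (-t) :=
  (Real.summable_abs_int_rpow hs).mul_of_nonneg (Real.summable_abs_int_rpow ht)
    (fun _ => by positivity) (fun _ => by positivity)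

noncomputable def waveFreq (jk : ℤ × ℤ) : ℝ≥0 := ‖(2 * jk.1 : ℝ)‖₊ + ‖(jk.2 : ℝ)‖₊

def wavePhase (jk : ℤ × ℤ) (z : ℝ × ℝ) : ℝ := 2 * (jk.1 : ℝ) * z.1 + (jk.2 : ℝ) * z.2

theorem lipschitzWith_wavePhase (jk : ℤ × ℤ) : LipschitzWith (waveFreq jk) (wavePhase jk) :=
  lipschitzWith_mul_fst_add_mul_snd _ _

noncomputable def waveWeight (s : ℝ) (jk : ℤ × ℤ) : ℝ :=
  if 2 * jk.1 = jk.2 ∨ 2 * jk.1 = -jk.2 then 0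
  else (waveFreq jk : ℝ) ^ s / |((4 * jk.1 ^ 2 - jk.2 ^ 2 : ℤ) : ℝ)|

theorem waveWeight_nonneg (s : ℝ) (jk : ℤ × ℤ) : 0 ≤ waveWeight s jk := by
  unfold waveWeight; split_ifs <;> positivity

theorem waveWeight_le (s : ℝ) (j k : ℤ) :
    waveWeight s (j, k) ≤ |((2 * j - k : ℤ) : ℝ)| ^ (s - 1) * |((2 * j + k : ℤ) : ℝ)| ^ (-1 : ℝ)
      + |((2 * j + k : ℤ) : ℝ)| ^ (s - 1) * |((2 * j - k : ℤ) : ℝ)| ^ (-1 : ℝ) := by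
  unfold waveWeight
  split_ifs with hchar
  · positivity
  set a : ℝ := ((2 * j - k : ℤ) : ℝ)
  set b : ℝ := ((2 * j + k : ℤ) : ℝ)
  have ha : 0 < |a| := abs_pos.2 (by simp only [a]; exact_mod_cast (by omega : 2 * j - k ≠ 0))
  have hb : 0 < |b| := abs_pos.2 (by simp only [b]; exact_mod_cast (by omega : 2 * j + k ≠ 0))
  have hfreq : (waveFreq (j, k) : ℝ) = max |a| |b| := by
    simp only [waveFreq, NNReal.coe_add, coe_nnnorm, Real.norm_eq_abs, a, b]
    push_cast
    rw [abs_add_abs_eq_max_abs_sub_abs_add]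
  have hden : |((4 * j ^ 2 - k ^ 2 : ℤ) : ℝ)| = |a| * |b| := by
    rw [← abs_mul]; simp only [a, b]; push_cast; ring_nf
  have hmax : max |a| |b| ^ s ≤ |a| ^ s + |b| ^ s := by
    rcases max_choice |a| |b| with h | h <;> rw [h] <;>
      linarith [Real.rpow_nonneg ha.le s, Real.rpow_nonneg hb.le s]
  rw [hfreq, hden, Real.rpow_sub ha, Real.rpow_sub hb, Real.rpow_neg_one, Real.rpow_neg_one,
    Real.rpow_one, Real.rpow_one]
  calc max |a| |b| ^ s / (|a| * |b|) ≤ (|a| ^ s + |b| ^ s) / (|a| * |b|) := by gcongr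
    _ = _ := by field_simp

theorem summable_waveWeight_rpow {p s : ℝ} (hp : 1 < p) (hs : s < 1 - 1 / p) :
    Summable fun jk => waveWeight s jk ^ p := by
  set g : ℤ × ℤ → ℝ := fun ab => |(ab.1 : ℝ)| ^ (s - 1) * |(ab.2 : ℝ)| ^ (-1 : ℝ)
  have hg : ∀ ab, 0 ≤ g ab := fun _ => by positivity
  have hgp : Summable fun ab => g ab ^ p := by
    have hsp : 1 < (1 - s) * p := (div_lt_iff₀ (by linarith)).1 (by linarith)
    refine (summable_abs_int_rpow_mul_abs_int_rpow hsp hp).congr fun ab => ?_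
    rw [Real.mul_rpow (by positivity) (by positivity), ← Real.rpow_mul (abs_nonneg _),
      ← Real.rpow_mul (abs_nonneg _)]
    ring_nf
  have hφ : Function.Injective fun jk : ℤ × ℤ => (2 * jk.1 - jk.2, 2 * jk.1 + jk.2) := by
    rintro ⟨j, k⟩ ⟨j', k'⟩ h
    simp only [Prod.mk.injEq] at h ⊢
    omega
  have hsum := (Real.summable_Lp_add_of_nonneg hp.le hg (fun ab => hg ab.swap) hgp
    (hgp.comp_injective Prod.swap_injective)).comp_injective hφ
  refine hsum.of_nonneg_of_le (fun _ => Real.rpow_nonneg (waveWeight_nonneg _ _) _)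
    fun ⟨j, k⟩ => Real.rpow_le_rpow (waveWeight_nonneg _ _) (waveWeight_le s j k) (by linarith)

noncomputable def waveCoeff (f : ℤ × ℤ → ℂ) (jk : ℤ × ℤ) : ℂ :=
  if 2 * jk.1 = jk.2 ∨ 2 * jk.1 = -jk.2 then 0 else f jk / ((4 * jk.1 ^ 2 - jk.2 ^ 2 : ℤ) : ℂ)

theorem norm_waveCoeff_mul_rpow (f : ℤ × ℤ → ℂ) (s : ℝ) (jk : ℤ × ℤ) :
    ‖waveCoeff f jk‖ * (waveFreq jk : ℝ) ^ s = waveWeight s jk * ‖f jk‖ := by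
  unfold waveCoeff waveWeight
  split_ifs
  · simp
  · rw [norm_div, Complex.norm_intCast]; ring

theorem summable_and_tsum_norm_waveCoeff_mul_rpow_le {p q s : ℝ} (hpq : p.HolderConjugate q)
    (hs : s < 1 - 1 / p) {f : ℤ × ℤ → ℂ} (hf : Summable fun jk => ‖f jk‖ ^ q) :
    (Summable fun jk => ‖waveCoeff f jk‖ * (waveFreq jk : ℝ) ^ s) ∧
      ∑' jk, ‖waveCoeff f jk‖ * (waveFreq jk : ℝ) ^ s
        ≤ (∑' jk, waveWeight s jk ^ p) ^ (1 / p) * (∑' jk, ‖f jk‖ ^ q) ^ (1 / q) := by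
  simp_rw [norm_waveCoeff_mul_rpow]
  exact Real.summable_and_inner_le_Lp_mul_Lq_tsum_of_nonneg hpq (waveWeight_nonneg s)
    (fun _ => norm_nonneg _) (summable_waveWeight_rpow hpq.lt hs) hf

theorem stmt3_general (p q γ : ℝ) (hp1 : 1 < p) (hpq : 1 / p + 1 / q = 1)
    (hγ0 : 0 < γ) (hγ : γ < 1 - 1 / p) :
    ∃ C : ℝ, 0 < C ∧ ∀ (fhat : ℤ × ℤ → ℂ),
      (∀ jk : ℤ × ℤ, (2 * jk.1 = jk.2 ∨ 2 * jk.1 = -jk.2) → fhat jk = 0) →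
      Summable (fun jk : ℤ × ℤ => ‖fhat jk‖ ^ q) →
      ∀ u : ℝ × ℝ → ℂ,
      (∀ x t : ℝ, u (x, t) =
        ∑' jk : ℤ × ℤ,
          (if 2 * jk.1 = jk.2 ∨ 2 * jk.1 = -jk.2 then 0
            else fhat jk / ((4 * jk.1 ^ 2 - jk.2 ^ 2 : ℤ) : ℂ)) *
            Complex.exp (Complex.I * ((2 * (jk.1 : ℝ) * x + (jk.2 : ℝ) * t : ℝ) : ℂ))) →
      (∀ z : ℝ × ℝ, ‖u z‖ ≤ C * (∑' jk : ℤ × ℤ, ‖fhat jk‖ ^ q) ^ (1 / q)) ∧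
      HolderOnWith (Real.toNNReal (C * (∑' jk : ℤ × ℤ, ‖fhat jk‖ ^ q) ^ (1 / q)))
        (Real.toNNReal γ) u (Set.Icc 0 π ×ˢ Set.Icc 0 (2 * π)) := by
  have hpq' : p.HolderConjugate q :=
    Real.holderConjugate_iff.mpr ⟨hp1, by simpa only [one_div] using hpq⟩
  have hγ1 : γ ≤ 1 := by linarith [one_div_pos.2 (zero_lt_one.trans hp1)]
  set S : ℝ → ℝ := fun s => (∑' jk, waveWeight s jk ^ p) ^ (1 / p)
  have hS : ∀ s, 0 ≤ S s := fun s =>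
    Real.rpow_nonneg (tsum_nonneg fun jk => Real.rpow_nonneg (waveWeight_nonneg s jk) p) _
  refine ⟨S 0 + 2 * S γ + 1, by linarith [hS 0, hS γ], fun f _ hf u hu => ?_⟩
  set N := (∑' jk : ℤ × ℤ, ‖f jk‖ ^ q) ^ (1 / q)
  have hN : 0 ≤ N := by positivity
  obtain ⟨hc, hcN⟩ := summable_and_tsum_norm_waveCoeff_mul_rpow_le hpq' (s := 0) (by linarith) hf
  obtain ⟨hcL, hcLN⟩ := summable_and_tsum_norm_waveCoeff_mul_rpow_le hpq' hγ hf
  simp only [Real.rpow_zero, mul_one] at hc hcN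
  obtain rfl : u = fun z => ∑' jk, waveCoeff f jk * exp (I * wavePhase jk z) :=
    funext fun z => hu z.1 z.2
  refine ⟨fun z => ?_, (holderWith_of_dist_le hγ0.le fun z w => ?_).holderOnWith _⟩
  · calc _ ≤ ∑' jk, ‖waveCoeff f jk‖ := norm_tsum_mul_exp_I_mul_le hc z
      _ ≤ S 0 * N := hcN
      _ ≤ _ := by nlinarith [hS γ]
  · calc _ ≤ 2 * (∑' jk, ‖waveCoeff f jk‖ * (waveFreq jk : ℝ) ^ γ) * dist z w ^ γ :=
          dist_tsum_mul_exp_I_mul_le lipschitzWith_wavePhase hγ0.le hγ1 hc hcL z w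
      _ ≤ 2 * (S γ * N) * dist z w ^ γ := by gcongr
      _ ≤ _ := by
        have hd : 0 ≤ dist z w ^ γ := by positivity
        linarith [mul_nonneg (mul_nonneg (add_nonneg (hS 0) zero_le_one) hN) hd]

/-- Hölder regularity of the solution of the periodic d'Alembertian:
if f̂ ∈ l^q vanishes on the characteristic set 2j = ±k and
û(j,k) = f̂(j,k)/(4j² − k²), then u = Σ û(j,k) e^{2ijx+ikt} belongs to
C^γ on Q = [0,π]×[0,2π] for every 0 < γ < 1 − 1/p, with
C⁰- and Hölder-norms bounded by C(γ,p)·‖f̂‖_{l^q}. -/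
theorem stmt3 (p q γ : ℝ) (hp1 : 1 < p) (hp2 : p ≤ 2) (hpq : 1 / p + 1 / q = 1)
    (hγ0 : 0 < γ) (hγ : γ < 1 - 1 / p) :
    ∃ C : ℝ, 0 < C ∧ ∀ (fhat : ℤ × ℤ → ℂ),
      (∀ jk : ℤ × ℤ, (2 * jk.1 = jk.2 ∨ 2 * jk.1 = -jk.2) → fhat jk = 0) →
      Summable (fun jk : ℤ × ℤ => ‖fhat jk‖ ^ q) →
      ∀ u : ℝ × ℝ → ℂ,
      (∀ x t : ℝ, u (x, t) =
        ∑' jk : ℤ × ℤ,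
          (if 2 * jk.1 = jk.2 ∨ 2 * jk.1 = -jk.2 then 0
            else fhat jk / ((4 * jk.1 ^ 2 - jk.2 ^ 2 : ℤ) : ℂ)) *
            Complex.exp (Complex.I * ((2 * (jk.1 : ℝ) * x + (jk.2 : ℝ) * t : ℝ) : ℂ))) →
      (∀ z : ℝ × ℝ, ‖u z‖ ≤ C * (∑' jk : ℤ × ℤ, ‖fhat jk‖ ^ q) ^ (1 / q)) ∧
      HolderOnWith (Real.toNNReal (C * (∑' jk : ℤ × ℤ, ‖fhat jk‖ ^ q) ^ (1 / q)))
        (Real.toNNReal γ) u (Set.Icc 0 π ×ˢ Set.Icc 0 (2 * π)) :=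
  stmt3_general p q γ hp1 hpq hγ0 hγ
end

section
/- Let f, w ∈ L²(Q), Q = [0,π]×[0,2π], with Fourier coefficients satisfying f̂(j,k) = 0 = ŵ(j,k) whenever 2j = ±k, and (4j² − k²) ŵ(j,k) = f̂(j,k) for all 2j ≠ ±k. Then w lies in the Sobolev space H¹(Q) and ‖w‖²_{H¹} ≤ ‖f‖²_{L²}, where ‖w‖²_{H¹} = Σ (4j² + k²) |ŵ(j,k)|². -/
lemma int_ineq (j k : ℤ) (h1 : 2 * j - k ≠ 0) (h2 : 2 * j + k ≠ 0) :
    4 * j ^ 2 + k ^ 2 ≤ (4 * j ^ 2 - k ^ 2) ^ 2 := by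
  have hp : 0 < (2 * j - k) ^ 2 := by positivity
  have hq : 0 < (2 * j + k) ^ 2 := by positivity
  have hp1 : 1 ≤ (2 * j - k) ^ 2 := hp
  have hq1 : 1 ≤ (2 * j + k) ^ 2 := hq
  nlinarith [sq_nonneg (2 * j - k), sq_nonneg (2 * j + k),
    mul_le_mul hp1 hq1 (by linarith) (by linarith)]

lemma pointwise (fhat what : ℤ × ℤ → ℂ)
    (h0 : ∀ jk : ℤ × ℤ, (2 * jk.1 = jk.2 ∨ 2 * jk.1 = -jk.2) → fhat jk = 0 ∧ what jk = 0)
    (heq : ∀ jk : ℤ × ℤ, 2 * jk.1 ≠ jk.2 → 2 * jk.1 ≠ -jk.2 →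
      ((4 * jk.1 ^ 2 - jk.2 ^ 2 : ℤ) : ℂ) * what jk = fhat jk) (jk : ℤ × ℤ) :
    ((4 * jk.1 ^ 2 + jk.2 ^ 2 : ℤ) : ℝ) * ‖what jk‖ ^ 2 ≤ ‖fhat jk‖ ^ 2 := by
  obtain ⟨j, k⟩ := jk
  by_cases hc : 2 * j = k ∨ 2 * j = -k
  · have := h0 (j, k) hc
    simp [this.2, norm_nonneg]
  · push_neg at hc
    have he := heq (j, k) hc.1 hc.2
    have hn : ‖fhat (j, k)‖ = |((4 * j ^ 2 - k ^ 2 : ℤ) : ℝ)| * ‖what (j, k)‖ := by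
      rw [← he, norm_mul]
      congr 1
      rw [show ((4 * j ^ 2 - k ^ 2 : ℤ) : ℂ) = (((4 * j ^ 2 - k ^ 2 : ℤ) : ℝ) : ℂ) by
        push_cast; ring]
      exact Complex.norm_real _
    have hineq : (4 * j ^ 2 + k ^ 2 : ℤ) ≤ (4 * j ^ 2 - k ^ 2) ^ 2 :=
      int_ineq j k (by omega) (by omega)
    have hr : ((4 * j ^ 2 + k ^ 2 : ℤ) : ℝ) ≤ ((4 * j ^ 2 - k ^ 2 : ℤ) : ℝ) ^ 2 := by
      exact_mod_cast hineq
    calc ((4 * j ^ 2 + k ^ 2 : ℤ) : ℝ) * ‖what (j, k)‖ ^ 2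
        ≤ ((4 * j ^ 2 - k ^ 2 : ℤ) : ℝ) ^ 2 * ‖what (j, k)‖ ^ 2 := by
          apply mul_le_mul_of_nonneg_right hr (by positivity)
      _ = ‖fhat (j, k)‖ ^ 2 := by rw [hn, mul_pow, sq_abs]

/-- If f̂, ŵ vanish on the characteristic set 2j = ±k, f̂ ∈ l² and
(4j² − k²)ŵ(j,k) = f̂(j,k) off the characteristic set, then w ∈ H¹ with
‖w‖²_{H¹} = Σ (4j² + k²)|ŵ(j,k)|² ≤ Σ |f̂(j,k)|² = ‖f‖²_{L²}. -/
theorem stmt4 (fhat what : ℤ × ℤ → ℂ)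
    (hf : Summable (fun jk : ℤ × ℤ => ‖fhat jk‖ ^ 2))
    (h0 : ∀ jk : ℤ × ℤ, (2 * jk.1 = jk.2 ∨ 2 * jk.1 = -jk.2) → fhat jk = 0 ∧ what jk = 0)
    (heq : ∀ jk : ℤ × ℤ, 2 * jk.1 ≠ jk.2 → 2 * jk.1 ≠ -jk.2 →
      ((4 * jk.1 ^ 2 - jk.2 ^ 2 : ℤ) : ℂ) * what jk = fhat jk) :
    Summable (fun jk : ℤ × ℤ => ((4 * jk.1 ^ 2 + jk.2 ^ 2 : ℤ) : ℝ) * ‖what jk‖ ^ 2) ∧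
    ∑' jk : ℤ × ℤ, ((4 * jk.1 ^ 2 + jk.2 ^ 2 : ℤ) : ℝ) * ‖what jk‖ ^ 2 ≤
      ∑' jk : ℤ × ℤ, ‖fhat jk‖ ^ 2 := by
  have hpt := pointwise fhat what h0 heq
  have hnn : ∀ jk : ℤ × ℤ, 0 ≤ ((4 * jk.1 ^ 2 + jk.2 ^ 2 : ℤ) : ℝ) * ‖what jk‖ ^ 2 := by
    intro jk
    have : (0 : ℤ) ≤ 4 * jk.1 ^ 2 + jk.2 ^ 2 := by positivity
    have : (0 : ℝ) ≤ ((4 * jk.1 ^ 2 + jk.2 ^ 2 : ℤ) : ℝ) := by exact_mod_cast this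
    positivity
  have hs : Summable (fun jk : ℤ × ℤ => ((4 * jk.1 ^ 2 + jk.2 ^ 2 : ℤ) : ℝ) * ‖what jk‖ ^ 2) :=
    Summable.of_nonneg_of_le hnn hpt hf
  exact ⟨hs, Summable.tsum_le_tsum hpt hs hf⟩
end

section
/- Let 0 < γ' < γ ≤ 1. If u ∈ C^{0,γ}([0,π]×[0,2π]) has Fourier expansion Σ û(j,k) e^{2ijx+ikt} supported on j ≥ 0, k ≥ 0, then u ∈ H^{γ'}, with ‖u‖²_{H^{γ'}} := Σ (2|j| + |k|)^{2γ'} |û(j,k)|² ≤ C(γ,γ') ‖u‖²_{C^{0,γ}}. -/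
/-!
Translating `u` diagonally by `h` multiplies `û(j,k)` by `e^{i(2j+k)h}`, so Bessel's inequality
for the bounded function `u(· + h, · + h) - u` gives
`∑ |û(j,k)|² |e^{i(2j+k)h} - 1|² ≤ K² |h|^{2γ}`.
On the quadrant `2j + k = 2|j| + |k|`, and on the dyadic block `2^m ≤ 2j + k < 2^{m+1}` the shift
`h = (2π/3) 2^{-m}` puts the phase `(2j+k)h` in `[2π/3, 4π/3]`, where `|e^{iθ} - 1|² ≥ 3`.
Hence the block contributes at most a constant times `K² 2^{2(γ'-γ)m}`, and these bounds sum
geometrically because `γ' < γ`.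
Bessel's inequality is obtained from the exact Parseval identity for trigonometric polynomials
sampled on an `N × N` grid, where `N`-th roots of unity are orthogonal, after truncating the
absolutely convergent Fourier series.
-/

open Finset Real ComplexConjugate

theorem sum_sq_norm_sum_eq_of_orthogonal {ι κ : Type*} [DecidableEq ι] (S : Finset κ)
    (G : Finset ι) (X : ι → κ → ℂ) (A : ℝ)
    (horth : ∀ p ∈ G, ∀ q ∈ G, ∑ z ∈ S, X p z * conj (X q z) = if p = q then (A : ℂ) else 0)
    (c : ι → ℂ) :
    ∑ z ∈ S, ‖∑ p ∈ G, c p * X p z‖ ^ 2 = A * ∑ p ∈ G, ‖c p‖ ^ 2 := by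
  apply Complex.ofReal_injective
  push_cast
  calc ∑ z ∈ S, (‖∑ p ∈ G, c p * X p z‖ : ℂ) ^ 2
      = ∑ p ∈ G, ∑ q ∈ G, c p * conj (c q) * ∑ z ∈ S, X p z * conj (X q z) := by
        simp_rw [← Complex.mul_conj', map_sum, map_mul, sum_mul_sum, mul_sum]
        rw [sum_comm]
        refine sum_congr rfl fun p _ => ?_
        rw [sum_comm]
        exact sum_congr rfl fun q _ => sum_congr rfl fun z _ => by ring
    _ = A * ∑ p ∈ G, (‖c p‖ : ℂ) ^ 2 := by
        rw [mul_sum]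
        refine sum_congr rfl fun p hp => ?_
        rw [sum_congr rfl fun q hq => by rw [horth p hp q hq], ← Complex.mul_conj']
        simp [hp, mul_comm]

theorem IsPrimitiveRoot.sum_range_zpow_pow {K : Type*} [Field K] {ζ : K} {N : ℕ}
    (hζ : IsPrimitiveRoot ζ N) (m : ℤ) :
    ∑ a ∈ range N, (ζ ^ m) ^ a = if (N : ℤ) ∣ m then (N : K) else 0 := by
  have hpow : (ζ ^ m) ^ N = 1 := by
    rw [← zpow_natCast, ← zpow_mul, mul_comm, zpow_mul, hζ.zpow_eq_one, one_zpow]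
  split_ifs with h
  · rw [(hζ.zpow_eq_one_iff_dvd m).mpr h]
    simp
  · rw [geom_sum_eq (mt (hζ.zpow_eq_one_iff_dvd m).mp h), hpow, sub_self, zero_div]

theorem IsPrimitiveRoot.sum_range_product_mul_conj {ζ : ℂ} {N : ℕ} (hζ : IsPrimitiveRoot ζ N)
    (hN : N ≠ 0) (p q : ℤ × ℤ) :
    ∑ z ∈ range N ×ˢ range N,
        (ζ ^ p.1) ^ z.1 * (ζ ^ p.2) ^ z.2 * conj ((ζ ^ q.1) ^ z.1 * (ζ ^ q.2) ^ z.2) =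
      if (N : ℤ) ∣ p.1 - q.1 ∧ (N : ℤ) ∣ p.2 - q.2 then (N : ℂ) ^ 2 else 0 := by
  have hconj : conj ζ = ζ⁻¹ := (Complex.inv_eq_conj (hζ.norm'_eq_one hN)).symm
  have hterm : ∀ z : ℕ × ℕ, (ζ ^ p.1) ^ z.1 * (ζ ^ p.2) ^ z.2 *
      conj ((ζ ^ q.1) ^ z.1 * (ζ ^ q.2) ^ z.2) =
      (ζ ^ (p.1 - q.1)) ^ z.1 * (ζ ^ (p.2 - q.2)) ^ z.2 := by
    intro z
    simp only [map_mul, map_pow, map_zpow₀, hconj, inv_zpow', zpow_neg,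
      zpow_sub₀ (hζ.ne_zero hN), div_eq_mul_inv, mul_pow]
    ring
  rw [sum_congr rfl fun z _ => hterm z, sum_product, ← sum_mul_sum, hζ.sum_range_zpow_pow,
    hζ.sum_range_zpow_pow]
  split_ifs <;> simp_all [sq]

noncomputable def fourierMode (p : ℤ × ℤ) (x t : ℝ) : ℂ :=
  Complex.exp (Complex.I * ((2 * (p.1 : ℝ) * x + (p.2 : ℝ) * t : ℝ) : ℂ))

theorem norm_fourierMode (p : ℤ × ℤ) (x t : ℝ) : ‖fourierMode p x t‖ = 1 :=
  Complex.norm_exp_I_mul_ofReal _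

theorem fourierMode_add (p : ℤ × ℤ) (x t y s : ℝ) :
    fourierMode p (x + y) (t + s) = fourierMode p x t * fourierMode p y s := by
  rw [fourierMode, fourierMode, fourierMode, ← Complex.exp_add]
  push_cast
  ring_nf

theorem fourierMode_grid {N : ℕ} (hN : N ≠ 0) (p : ℤ × ℤ) (a b : ℕ) :
    fourierMode p (π * a / N) (2 * π * b / N) =
      (Complex.exp (2 * π * Complex.I / N) ^ p.1) ^ a *
        (Complex.exp (2 * π * Complex.I / N) ^ p.2) ^ b := by
  simp only [fourierMode, ← Complex.exp_int_mul, ← Complex.exp_nat_mul, ← Complex.exp_add]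
  congr 1
  have : (N : ℂ) ≠ 0 := Nat.cast_ne_zero.mpr hN
  push_cast
  field_simp

theorem sum_sq_norm_le_of_norm_sum_fourierMode_le (G : Finset (ℤ × ℤ)) (c : ℤ × ℤ → ℂ) {M : ℝ}
    (hM : ∀ x t, ‖∑ p ∈ G, c p * fourierMode p x t‖ ≤ M) : ∑ p ∈ G, ‖c p‖ ^ 2 ≤ M ^ 2 := by
  classical
  set R := G.sup fun p => max p.1.natAbs p.2.natAbs
  -- `N` exceeds every coordinate difference in `G`, so distinct modes of `G` stay orthogonal
  -- on the `N × N` grid.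
  set N := 2 * R + 1
  have hN : N ≠ 0 := by omega
  set ζ := Complex.exp (2 * π * Complex.I / N)
  have hζ : IsPrimitiveRoot ζ N := Complex.isPrimitiveRoot_exp N hN
  have hsep : ∀ p ∈ G, ∀ q ∈ G, ((N : ℤ) ∣ p.1 - q.1 ∧ (N : ℤ) ∣ p.2 - q.2 ↔ p = q) := by
    intro p hp q hq
    have hpR := le_sup (f := fun p : ℤ × ℤ => max p.1.natAbs p.2.natAbs) hp
    have hqR := le_sup (f := fun p : ℤ × ℤ => max p.1.natAbs p.2.natAbs) hq
    refine ⟨fun ⟨h1, h2⟩ => Prod.ext ?_ ?_, fun h => by simp [h]⟩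
    · have := Int.eq_zero_of_abs_lt_dvd h1 (by rw [abs_lt]; omega)
      omega
    · have := Int.eq_zero_of_abs_lt_dvd h2 (by rw [abs_lt]; omega)
      omega
  set X : ℤ × ℤ → ℕ × ℕ → ℂ := fun p z => (ζ ^ p.1) ^ z.1 * (ζ ^ p.2) ^ z.2
  have hparseval := sum_sq_norm_sum_eq_of_orthogonal (range N ×ˢ range N) G X ((N : ℝ) ^ 2)
    (fun p hp q hq => by
      rw [hζ.sum_range_product_mul_conj hN, if_congr (hsep p hp q hq) rfl rfl]
      push_cast
      rfl) c
  have hgrid : ∑ z ∈ range N ×ˢ range N, ‖∑ p ∈ G, c p * X p z‖ ^ 2 ≤ (N : ℝ) ^ 2 * M ^ 2 :=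
    calc _ ≤ ∑ z ∈ range N ×ˢ range N, M ^ 2 := by
          refine sum_le_sum fun z _ => pow_le_pow_left₀ (norm_nonneg _) ?_ 2
          simpa only [fourierMode_grid hN] using hM (π * z.1 / N) (2 * π * z.2 / N)
      _ = (N : ℝ) ^ 2 * M ^ 2 := by simp [sq]
  exact le_of_mul_le_mul_left (hparseval ▸ hgrid) (by positivity)

open Filter Topology in
theorem sum_sq_norm_le_of_norm_tsum_fourierMode_le {c : ℤ × ℤ → ℂ} (hc : Summable (‖c ·‖))
    {M : ℝ} (hM : ∀ x t, ‖∑' p, c p * fourierMode p x t‖ ≤ M) (F : Finset (ℤ × ℤ)) :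
    ∑ p ∈ F, ‖c p‖ ^ 2 ≤ M ^ 2 := by
  set tail : Finset (ℤ × ℤ) → ℝ := fun G => ∑' p, ‖c p‖ - ∑ p ∈ G, ‖c p‖
  have htail : Tendsto tail atTop (𝓝 0) := by
    simpa using (tendsto_const_nhds (x := ∑' p, ‖c p‖)).sub hc.hasSum
  have hpartial : ∀ G x t, ‖∑ p ∈ G, c p * fourierMode p x t‖ ≤ M + tail G := by
    intro G x t
    have hnorm : ∀ p, ‖c p * fourierMode p x t‖ = ‖c p‖ := by simp [norm_fourierMode]
    have hs : Summable fun p => c p * fourierMode p x t := .of_norm (by simpa only [hnorm])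
    have hrem : ‖∑' p, c p * fourierMode p x t - ∑ p ∈ G, c p * fourierMode p x t‖ ≤ tail G := by
      rw [← hs.sum_add_tsum_compl (s := G), add_sub_cancel_left]
      calc _ ≤ ∑' p : ↑(↑G : Set (ℤ × ℤ))ᶜ, ‖c p‖ := by
            simpa only [hnorm] using norm_tsum_le_tsum_norm
              (f := fun p : ↑(↑G : Set (ℤ × ℤ))ᶜ => c p * fourierMode p x t)
              ((hc.subtype _).congr fun p => (hnorm p).symm)
        _ = tail G := by rw [eq_sub_of_add_eq' (hc.sum_add_tsum_compl (s := G))]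
    calc _ = ‖(∑' p, c p * fourierMode p x t) -
            (∑' p, c p * fourierMode p x t - ∑ p ∈ G, c p * fourierMode p x t)‖ := by
          rw [sub_sub_cancel]
      _ ≤ M + tail G := (norm_sub_le _ _).trans (add_le_add (hM x t) hrem)
  refine ge_of_tendsto (by simpa using ((tendsto_const_nhds (x := M)).add htail).pow 2) ?_
  filter_upwards [eventually_ge_atTop F] with G hG
  calc ∑ p ∈ F, ‖c p‖ ^ 2 ≤ ∑ p ∈ G, ‖c p‖ ^ 2 :=
        sum_le_sum_of_subset_of_nonneg hG fun _ _ _ => by positivity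
    _ ≤ (M + tail G) ^ 2 := sum_sq_norm_le_of_norm_sum_fourierMode_le G c (hpartial G)

theorem sum_sq_norm_mul_fourierMode_sub_one_le {uhat : ℤ × ℤ → ℂ} (hc : Summable (‖uhat ·‖))
    {u : ℝ × ℝ → ℂ} (hu : ∀ x t, u (x, t) = ∑' p, uhat p * fourierMode p x t) {h M : ℝ}
    (hM : ∀ x t, ‖u (x + h, t + h) - u (x, t)‖ ≤ M) (F : Finset (ℤ × ℤ)) :
    ∑ p ∈ F, ‖uhat p * (fourierMode p h h - 1)‖ ^ 2 ≤ M ^ 2 := by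
  have hsum : ∀ x t, Summable fun p => uhat p * fourierMode p x t := fun x t =>
    .of_norm (by simpa [norm_fourierMode] using hc)
  refine sum_sq_norm_le_of_norm_tsum_fourierMode_le ?_ (fun x t => ?_) F
  · refine .of_nonneg_of_le (fun _ => norm_nonneg _) (fun p => ?_) (hc.mul_left 2)
    rw [norm_mul, mul_comm]
    gcongr
    calc ‖fourierMode p h h - 1‖ ≤ ‖fourierMode p h h‖ + ‖(1 : ℂ)‖ := norm_sub_le _ _
      _ = 2 := by rw [norm_fourierMode, norm_one]; norm_num
  · convert hM x t using 2
    rw [hu, hu, ← (hsum _ _).tsum_sub (hsum x t)]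
    refine tsum_congr fun p => ?_
    rw [fourierMode_add p x t h h]
    ring

theorem Real.cos_le_neg_half_of_mem_Icc {θ : ℝ} (hθ : θ ∈ Set.Icc (2 * π / 3) (4 * π / 3)) :
    cos θ ≤ -(1 / 2) := by
  have : 1 / 2 ≤ cos (θ - π) := by
    rw [← cos_abs, ← cos_pi_div_three]
    exact cos_le_cos_of_nonneg_of_le_pi (abs_nonneg _) (by linarith [pi_pos])
      (abs_le.mpr ⟨by linarith [hθ.1], by linarith [hθ.2]⟩)
  linarith [cos_sub_pi θ]

theorem Complex.norm_exp_I_mul_ofReal_sub_one_sq (θ : ℝ) :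
    ‖Complex.exp (Complex.I * θ) - 1‖ ^ 2 = 2 - 2 * Real.cos θ := by
  rw [Complex.norm_exp_I_mul_ofReal_sub_one, Real.norm_eq_abs, sq_abs, mul_pow,
    sin_sq_eq_half_sub, mul_div_cancel₀ _ two_ne_zero]
  ring

theorem three_le_norm_exp_I_mul_ofReal_sub_one_sq {θ : ℝ}
    (hθ : θ ∈ Set.Icc (2 * π / 3) (4 * π / 3)) : 3 ≤ ‖Complex.exp (Complex.I * θ) - 1‖ ^ 2 := by
  rw [Complex.norm_exp_I_mul_ofReal_sub_one_sq]
  linarith [cos_le_neg_half_of_mem_Icc hθ]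

def modeOrder (p : ℤ × ℤ) : ℕ := 2 * p.1.natAbs + p.2.natAbs

theorem cast_modeOrder (p : ℤ × ℤ) : (modeOrder p : ℝ) = ((2 * |p.1| + |p.2| : ℤ) : ℝ) := by
  simp [modeOrder, Nat.cast_natAbs]

theorem cast_modeOrder_of_nonneg {p : ℤ × ℤ} (h1 : 0 ≤ p.1) (h2 : 0 ≤ p.2) :
    (modeOrder p : ℝ) = 2 * p.1 + p.2 := by
  rw [cast_modeOrder, abs_of_nonneg h1, abs_of_nonneg h2]
  push_cast
  rfl

theorem rpow_modeOrder_mul_sq_norm_le {uhat : ℤ × ℤ → ℂ}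
    (hquad : ∀ p : ℤ × ℤ, ¬(0 ≤ p.1 ∧ 0 ≤ p.2) → uhat p = 0) {s : ℝ} (hs : 0 ≤ s) {m : ℕ}
    {p : ℤ × ℤ} (hp : 2 ^ m ≤ modeOrder p ∧ modeOrder p ≤ 2 ^ (m + 1)) :
    (modeOrder p : ℝ) ^ s * ‖uhat p‖ ^ 2 ≤
      ((2 : ℝ) ^ (m + 1)) ^ s / 3 *
        ‖uhat p * (fourierMode p (2 * π / 3 / 2 ^ m) (2 * π / 3 / 2 ^ m) - 1)‖ ^ 2 := by
  by_cases hpos : 0 ≤ p.1 ∧ 0 ≤ p.2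
  swap
  · simp [hquad p hpos]
  set h : ℝ := 2 * π / 3 / 2 ^ m
  have hlo : (2 : ℝ) ^ m ≤ modeOrder p := by exact_mod_cast hp.1
  have hhi : (modeOrder p : ℝ) ≤ 2 ^ (m + 1) := by exact_mod_cast hp.2
  have hphase : 2 * (p.1 : ℝ) * h + p.2 * h = modeOrder p * h := by
    rw [cast_modeOrder_of_nonneg hpos.1 hpos.2]
    ring
  have h2m : (0 : ℝ) < 2 ^ m := by positivity
  have hexp : 3 ≤ ‖fourierMode p h h - 1‖ ^ 2 := by
    refine three_le_norm_exp_I_mul_ofReal_sub_one_sq (θ := 2 * (p.1 : ℝ) * h + p.2 * h) ⟨?_, ?_⟩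
    · rw [hphase, mul_div_assoc', le_div_iff₀ h2m]
      nlinarith [pi_pos]
    · rw [hphase, mul_div_assoc', div_le_iff₀ h2m]
      rw [pow_succ] at hhi
      nlinarith [pi_pos]
  have hweight : (modeOrder p : ℝ) ^ s ≤ ((2 : ℝ) ^ (m + 1)) ^ s :=
    rpow_le_rpow (Nat.cast_nonneg _) hhi hs
  rw [norm_mul, mul_pow]
  calc (modeOrder p : ℝ) ^ s * ‖uhat p‖ ^ 2 ≤ ((2 : ℝ) ^ (m + 1)) ^ s * ‖uhat p‖ ^ 2 := by
        gcongr
    _ ≤ ((2 : ℝ) ^ (m + 1)) ^ s / 3 * (‖uhat p‖ ^ 2 * ‖fourierMode p h h - 1‖ ^ 2) := by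
        have : 0 ≤ ((2 : ℝ) ^ (m + 1)) ^ s := by positivity
        rw [div_mul_eq_mul_div, le_div_iff₀ three_pos]
        nlinarith [mul_le_mul_of_nonneg_left hexp (mul_nonneg this (sq_nonneg ‖uhat p‖))]

theorem sum_le_tsum_of_dyadic_blocks {α : Type*} {f : α → ℝ} (ν : α → ℕ)
    (hν : ∀ a, ν a = 0 → f a = 0) {b : ℕ → ℝ} (hb : Summable b)
    (hblock : ∀ m (F : Finset α), (∀ a ∈ F, 2 ^ m ≤ ν a ∧ ν a < 2 ^ (m + 1)) →
      ∑ a ∈ F, f a ≤ b m)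
    (F : Finset α) : ∑ a ∈ F, f a ≤ ∑' m, b m := by
  classical
  set F' := F.filter fun a => ν a ≠ 0
  have hF' : ∑ a ∈ F', f a = ∑ a ∈ F, f a :=
    sum_filter_of_ne fun a _ hfa hνa => hfa (hν a hνa)
  rw [← hF', ← sum_fiberwise_of_maps_to fun a ha => mem_image_of_mem (fun a => Nat.log 2 (ν a)) ha]
  calc _ ≤ ∑ m ∈ F'.image (fun a => Nat.log 2 (ν a)), b m := by
        refine sum_le_sum fun m _ => hblock m _ fun a ha => ?_
        obtain ⟨haF', rfl⟩ := mem_filter.mp ha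
        exact ⟨Nat.pow_log_le_self 2 (mem_filter.mp haF').2, Nat.lt_pow_succ_log_self one_lt_two _⟩
    _ ≤ ∑' m, b m := hb.sum_le_tsum _ fun m _ => by simpa using hblock m ∅ (by simp)

theorem stmt11_general (γ γ' : ℝ) (h0 : 0 < γ') (h1 : γ' < γ) :
    ∃ C : ℝ, 0 < C ∧ ∀ (uhat : ℤ × ℤ → ℂ) (u : ℝ × ℝ → ℂ) (K : ℝ), 0 ≤ K →
      (∀ jk : ℤ × ℤ, ¬(0 ≤ jk.1 ∧ 0 ≤ jk.2) → uhat jk = 0) →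
      (∀ x t : ℝ, Summable (fun jk : ℤ × ℤ => uhat jk *
        Complex.exp (Complex.I * ((2 * (jk.1 : ℝ) * x + (jk.2 : ℝ) * t : ℝ) : ℂ)))) →
      (∀ x t : ℝ, u (x, t) = ∑' jk : ℤ × ℤ, uhat jk *
        Complex.exp (Complex.I * ((2 * (jk.1 : ℝ) * x + (jk.2 : ℝ) * t : ℝ) : ℂ))) →
      (∀ z : ℝ × ℝ, ‖u z‖ ≤ K) →
      (∀ z w : ℝ × ℝ, ‖u z - u w‖ ≤ K * dist z w ^ γ) →
      Summable (fun jk : ℤ × ℤ =>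
        ((2 * |jk.1| + |jk.2| : ℤ) : ℝ) ^ (2 * γ') * ‖uhat jk‖ ^ 2) ∧
      ∑' jk : ℤ × ℤ, ((2 * |jk.1| + |jk.2| : ℤ) : ℝ) ^ (2 * γ') * ‖uhat jk‖ ^ 2 ≤
        C * K ^ 2 := by
  set q : ℝ := 2 ^ (2 * γ') / 2 ^ (2 * γ) with hq
  have hq0 : 0 ≤ q := by positivity
  have hq1 : q < 1 :=
    (div_lt_one (by positivity)).mpr (rpow_lt_rpow_of_exponent_lt one_lt_two (by linarith))
  set B : ℝ := 2 ^ (2 * γ') * (2 * π / 3) ^ (2 * γ) / 3 with hB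
  refine ⟨B * (1 - q)⁻¹, by have := sub_pos.mpr hq1; positivity, ?_⟩
  intro uhat u K _ hquad hsum hu _ hHolder
  have habs : Summable (‖uhat ·‖) := ((hsum 0 0).congr fun p => by simp).norm
  have hdiff : ∀ h F, ∑ p ∈ F, ‖uhat p * (fourierMode p h h - 1)‖ ^ 2 ≤ (K * |h| ^ γ) ^ 2 :=
    fun h => sum_sq_norm_mul_fourierMode_sub_one_le habs hu fun x t => by
      simpa [Prod.dist_eq, Real.dist_eq] using hHolder (x + h, t + h) (x, t)
  have hblock : ∀ m F, (∀ p ∈ F, 2 ^ m ≤ modeOrder p ∧ modeOrder p < 2 ^ (m + 1)) →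
      ∑ p ∈ F, (modeOrder p : ℝ) ^ (2 * γ') * ‖uhat p‖ ^ 2 ≤ K ^ 2 * B * q ^ m := by
    intro m F hF
    set h : ℝ := 2 * π / 3 / 2 ^ m
    calc _ ≤ ∑ p ∈ F, ((2 : ℝ) ^ (m + 1)) ^ (2 * γ') / 3 *
            ‖uhat p * (fourierMode p h h - 1)‖ ^ 2 :=
          sum_le_sum fun p hp => rpow_modeOrder_mul_sq_norm_le hquad (by positivity)
            ⟨(hF p hp).1, (hF p hp).2.le⟩
      _ ≤ ((2 : ℝ) ^ (m + 1)) ^ (2 * γ') / 3 * (K * |h| ^ γ) ^ 2 := by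
          rw [← mul_sum]
          gcongr
          exact hdiff h F
      _ = K ^ 2 * B * q ^ m := by
          have hsq : ∀ x : ℝ, 0 ≤ x → (x ^ γ) ^ 2 = x ^ (2 * γ) := fun x hx => by
            rw [mul_comm, rpow_mul hx, rpow_two]
          rw [abs_of_pos (by positivity), mul_pow, hsq _ (by positivity),
            div_rpow (by positivity) (by positivity), ← rpow_pow_comm zero_le_two,
            ← rpow_pow_comm zero_le_two, hq, hB, div_pow, pow_succ]
          field_simp
  have hfin : ∀ F : Finset (ℤ × ℤ),
      ∑ p ∈ F, (modeOrder p : ℝ) ^ (2 * γ') * ‖uhat p‖ ^ 2 ≤ B * (1 - q)⁻¹ * K ^ 2 := fun F =>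
    (sum_le_tsum_of_dyadic_blocks modeOrder
      (fun p hp => by simp [hp, zero_rpow (by positivity : 2 * γ' ≠ 0)])
      ((summable_geometric_of_lt_one hq0 hq1).mul_left _) hblock F).trans_eq
      (by rw [tsum_mul_left, tsum_geometric_of_lt_one hq0 hq1]; ring)
  have hnonneg : 0 ≤ fun p => (modeOrder p : ℝ) ^ (2 * γ') * ‖uhat p‖ ^ 2 := fun p => by positivity
  simp_rw [← cast_modeOrder]
  exact ⟨summable_of_sum_le hnonneg hfin, Real.tsum_le_of_sum_le hnonneg hfin⟩

/-- If u ∈ C^{0,γ} has Fourier expansion supported in the quadrant j ≥ 0, k ≥ 0,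
then u ∈ H^{γ'} for 0 < γ' < γ ≤ 1, with
Σ (2|j|+|k|)^{2γ'}|û(j,k)|² ≤ C(γ,γ')·‖u‖²_{C^{0,γ}}. -/
theorem stmt11 (γ γ' : ℝ) (h0 : 0 < γ') (h1 : γ' < γ) (h2 : γ ≤ 1) :
    ∃ C : ℝ, 0 < C ∧ ∀ (uhat : ℤ × ℤ → ℂ) (u : ℝ × ℝ → ℂ) (K : ℝ), 0 ≤ K →
      (∀ jk : ℤ × ℤ, ¬(0 ≤ jk.1 ∧ 0 ≤ jk.2) → uhat jk = 0) →
      (∀ x t : ℝ, Summable (fun jk : ℤ × ℤ => uhat jk *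
        Complex.exp (Complex.I * ((2 * (jk.1 : ℝ) * x + (jk.2 : ℝ) * t : ℝ) : ℂ)))) →
      (∀ x t : ℝ, u (x, t) = ∑' jk : ℤ × ℤ, uhat jk *
        Complex.exp (Complex.I * ((2 * (jk.1 : ℝ) * x + (jk.2 : ℝ) * t : ℝ) : ℂ))) →
      (∀ z : ℝ × ℝ, ‖u z‖ ≤ K) →
      (∀ z w : ℝ × ℝ, ‖u z - u w‖ ≤ K * dist z w ^ γ) →
      Summable (fun jk : ℤ × ℤ =>
        ((2 * |jk.1| + |jk.2| : ℤ) : ℝ) ^ (2 * γ') * ‖uhat jk‖ ^ 2) ∧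
      ∑' jk : ℤ × ℤ, ((2 * |jk.1| + |jk.2| : ℤ) : ℝ) ^ (2 * γ') * ‖uhat jk‖ ^ 2 ≤
        C * K ^ 2 :=
  stmt11_general γ γ' h0 h1
end

section
/- Let v = v⁺ + v⁻ with v⁺(x,t) = p₁(x+t), v⁻(x,t) = p₂(x−t) (p₁, p₂ π-periodic, p₁ of mean zero), and let q be the truncation q(s) = s − M sgn(s) for |s| ≥ M and q(s) = 0 for |s| ≤ M (M ≥ 0). Set φ = q(v⁺) + q(v⁻). Then ∫_Q v_t φ_t dx dt = ∫_Q [q'(v⁺)(v⁺_t)² + q'(v⁻)(v⁻_t)²] dx dt ≥ 0, assuming p₁, p₂ ∈ H¹. -/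
/-!
Expanding the integrand leaves the two diagonal terms and two cross terms of the form
`f (x + t) * g (x - t)`. For `T`-periodic bounded `f`, `g`, the substitution `s = x + t` followed
by integration in `x` first gives `∫_Q f (x + t) g (x - t) = 2 (∫₀ᵀ f) (∫₀ᵀ g)`, and the cross
terms vanish because the derivative of a periodic function has mean zero.
-/

open scoped Real
open MeasureTheory Set Function

namespace Function.Periodic

variable {f : ℝ → ℝ} {T : ℝ}

theorem deriv (hf : Periodic f T) : Periodic (deriv f) T := fun x => by
  rw [← deriv_comp_add_const, funext hf]

theorem intervalIntegral_deriv_eq_zero (hf : Periodic f T) (hd : ContDiff ℝ 1 f) :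
    ∫ y in (0 : ℝ)..T, _root_.deriv f y = 0 := by
  rw [intervalIntegral.integral_deriv_eq_sub
    (fun x _ => (hd.differentiable one_ne_zero).differentiableAt)
    ((hd.continuous_deriv le_rfl).intervalIntegrable 0 T), ← zero_add T, hf, sub_self]

theorem exists_abs_le_of_continuous (hf : Periodic f T) (hT : T ≠ 0) (hc : Continuous f) :
    ∃ C, ∀ y, |f y| ≤ C := by
  obtain ⟨C, hC⟩ := isBounded_iff_forall_norm_le.1 (hf.isBounded_of_continuous hT hc)
  exact ⟨C, fun y => hC _ (mem_range_self y)⟩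

theorem intervalIntegral_add_two_mul_eq (hf : Periodic f T)
    (hint : IntervalIntegrable f volume 0 T) (t : ℝ) :
    ∫ y in t..t + 2 * T, f y = 2 * ∫ y in (0 : ℝ)..T, f y := by
  rcases eq_or_ne T 0 with rfl | hT
  · simp
  simpa [two_mul, hf.intervalIntegral_add_eq t 0] using
    hf.intervalIntegral_add_zsmul_eq 2 t (hf.intervalIntegrable₀ hT hint)

theorem intervalIntegral_comp_two_mul_sub (hf : Periodic f T)
    (hint : IntervalIntegrable f volume 0 T) (s : ℝ) :
    ∫ x in (0 : ℝ)..T, f (2 * x - s) = ∫ y in (0 : ℝ)..T, f y := by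
  rw [intervalIntegral.integral_comp_mul_sub f two_ne_zero, mul_zero, zero_sub,
    show 2 * T - s = -s + 2 * T by ring, hf.intervalIntegral_add_two_mul_eq hint, smul_eq_mul,
    inv_mul_cancel_left₀ two_ne_zero]

theorem intervalIntegral_comp_add_mul_comp_sub {g : ℝ → ℝ} (hf : Periodic f T)
    (hg : Periodic g T) (x : ℝ) :
    ∫ t in (0 : ℝ)..2 * T, f (x + t) * g (x - t) =
      ∫ s in (0 : ℝ)..2 * T, f s * g (2 * x - s) := by
  have hper : Periodic (fun s => f s * g (2 * x - s)) (2 * T) := by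
    simpa using (hf.nat_mul 2).mul ((hg.nat_mul 2).const_sub (2 * x))
  calc ∫ t in (0 : ℝ)..2 * T, f (x + t) * g (x - t)
      = ∫ t in (0 : ℝ)..2 * T, f (x + t) * g (2 * x - (x + t)) := by ring_nf
    _ = ∫ s in x..x + 2 * T, f s * g (2 * x - s) := by
      simpa using intervalIntegral.integral_comp_add_left (a := 0) (b := 2 * T)
        (fun s => f s * g (2 * x - s)) x
    _ = ∫ s in (0 : ℝ)..2 * T, f s * g (2 * x - s) := by
      simpa using hper.intervalIntegral_add_eq x 0

end Function.Periodic

theorem integrableOn_comp_mul_comp {α : Type*} [MeasurableSpace α] {μ : Measure α} {s : Set α}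
    (hs : μ s ≠ ⊤) {f g : ℝ → ℝ} {C : ℝ} (hf : Measurable f) (hg : Measurable g)
    (hfC : ∀ y, |f y| ≤ C) (hgC : ∀ y, |g y| ≤ C) {u v : α → ℝ} (hu : Measurable u)
    (hv : Measurable v) : IntegrableOn (fun z => f (u z) * g (v z)) s μ :=
  Measure.integrableOn_of_bounded (M := C * C) hs
    ((hf.comp hu).mul (hg.comp hv)).aestronglyMeasurable
    (.of_forall fun z => by
      rw [Real.norm_eq_abs, abs_mul]
      exact mul_le_mul (hfC _) (hgC _) (abs_nonneg _) ((abs_nonneg _).trans (hfC 0)))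

theorem setIntegral_Icc_prod_Icc_comp_add_mul_comp_sub {f g : ℝ → ℝ} {T C : ℝ} (hT : 0 ≤ T)
    (hf : Measurable f) (hg : Measurable g) (hfC : ∀ y, |f y| ≤ C) (hgC : ∀ y, |g y| ≤ C)
    (hfT : Periodic f T) (hgT : Periodic g T) :
    ∫ z in Icc 0 T ×ˢ Icc 0 (2 * T), f (z.1 + z.2) * g (z.1 - z.2) =
      2 * (∫ y in (0 : ℝ)..T, f y) * ∫ y in (0 : ℝ)..T, g y := by
  have hfi : IntervalIntegrable f volume 0 T :=
    intervalIntegrable_const.mono_fun' hf.aestronglyMeasurable (ae_of_all _ hfC)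
  have hgi : IntervalIntegrable g volume 0 T :=
    intervalIntegrable_const.mono_fun' hg.aestronglyMeasurable (ae_of_all _ hgC)
  have hint : IntegrableOn (fun z : ℝ × ℝ => f (z.1 + z.2) * g (z.1 - z.2))
      (Icc 0 T ×ˢ Icc 0 (2 * T)) :=
    integrableOn_comp_mul_comp (isCompact_Icc.prod isCompact_Icc).measure_lt_top.ne
      hf hg hfC hgC (by fun_prop) (by fun_prop)
  have hint_swap : IntegrableOn (uncurry fun x s => f s * g (2 * x - s))
      (uIoc 0 T ×ˢ uIoc 0 (2 * T)) :=
    integrableOn_comp_mul_comp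
      ((Metric.isBounded_Ioc _ _).prod (Metric.isBounded_Ioc _ _)).measure_lt_top.ne
      hf hg hfC hgC (by fun_prop) (by fun_prop)
  rw [Measure.volume_eq_prod, setIntegral_prod _ hint]
  simp_rw [integral_Icc_eq_integral_Ioc, ← intervalIntegral.integral_of_le hT,
    ← intervalIntegral.integral_of_le (by linarith : (0 : ℝ) ≤ 2 * T),
    hfT.intervalIntegral_comp_add_mul_comp_sub hgT]
  rw [intervalIntegral_intervalIntegral_swap hint_swap]
  simp_rw [intervalIntegral.integral_const_mul, hgT.intervalIntegral_comp_two_mul_sub hgi]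
  rw [intervalIntegral.integral_mul_const, ← zero_add (2 * T),
    hfT.intervalIntegral_add_two_mul_eq hfi]

theorem setIntegral_Icc_prod_Icc_sub_mul_sub {a b c d : ℝ → ℝ} {T C : ℝ} (hT : 0 ≤ T)
    (ha : Measurable a) (hb : Measurable b) (hc : Measurable c) (hd : Measurable d)
    (haC : ∀ y, |a y| ≤ C) (hbC : ∀ y, |b y| ≤ C) (hcC : ∀ y, |c y| ≤ C) (hdC : ∀ y, |d y| ≤ C)
    (haT : Periodic a T) (hbT : Periodic b T) (hcT : Periodic c T) (hdT : Periodic d T)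
    (ha0 : ∫ y in (0 : ℝ)..T, a y = 0) (hb0 : ∫ y in (0 : ℝ)..T, b y = 0) :
    ∫ z in Icc 0 T ×ˢ Icc 0 (2 * T),
        (a (z.1 + z.2) - b (z.1 - z.2)) * (c (z.1 + z.2) - d (z.1 - z.2)) =
      ∫ z in Icc 0 T ×ˢ Icc 0 (2 * T),
        (a (z.1 + z.2) * c (z.1 + z.2) + b (z.1 - z.2) * d (z.1 - z.2)) := by
  have hbox : volume (Icc (0 : ℝ) T ×ˢ Icc 0 (2 * T)) ≠ ⊤ :=
    (isCompact_Icc.prod isCompact_Icc).measure_lt_top.ne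
  have hadd : Measurable fun z : ℝ × ℝ => z.1 + z.2 := by fun_prop
  have hsub : Measurable fun z : ℝ × ℝ => z.1 - z.2 := by fun_prop
  have hac := integrableOn_comp_mul_comp hbox ha hc haC hcC hadd hadd
  have hbd := integrableOn_comp_mul_comp hbox hb hd hbC hdC hsub hsub
  have hcb_int := integrableOn_comp_mul_comp hbox hc hb hcC hbC hadd hsub
  have had_int := integrableOn_comp_mul_comp hbox ha hd haC hdC hadd hsub
  have hcb : ∫ z in Icc 0 T ×ˢ Icc 0 (2 * T), c (z.1 + z.2) * b (z.1 - z.2) = 0 := by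
    rw [setIntegral_Icc_prod_Icc_comp_add_mul_comp_sub hT hc hb hcC hbC hcT hbT, hb0, mul_zero]
  have had : ∫ z in Icc 0 T ×ˢ Icc 0 (2 * T), a (z.1 + z.2) * d (z.1 - z.2) = 0 := by
    rw [setIntegral_Icc_prod_Icc_comp_add_mul_comp_sub hT ha hd haC hdC haT hdT, ha0, mul_zero,
      zero_mul]
  calc _ = ∫ z in Icc 0 T ×ˢ Icc 0 (2 * T),
        (a (z.1 + z.2) * c (z.1 + z.2) + b (z.1 - z.2) * d (z.1 - z.2) -
          c (z.1 + z.2) * b (z.1 - z.2) - a (z.1 + z.2) * d (z.1 - z.2)) := by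
        congr with z; ring
    _ = _ := by
      rw [integral_sub ?_ had_int, integral_sub ?_ hcb_int, hcb, had, sub_zero, sub_zero]
      · exact hac.add hbd
      · exact (hac.add hbd).sub hcb_int

theorem stmt18_general (p1 p2 : ℝ → ℝ) (M : ℝ)
    (hp1 : ContDiff ℝ 1 p1) (hp2 : ContDiff ℝ 1 p2)
    (hper1 : Function.Periodic p1 π) (hper2 : Function.Periodic p2 π)
    (qd : ℝ → ℝ)
    (hqd : ∀ y : ℝ, qd y = if M < |y| then 1 else 0) :
    (∫ z in Set.Icc (0 : ℝ) π ×ˢ Set.Icc (0 : ℝ) (2 * π),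
        (deriv p1 (z.1 + z.2) - deriv p2 (z.1 - z.2)) *
          (qd (p1 (z.1 + z.2)) * deriv p1 (z.1 + z.2) -
            qd (p2 (z.1 - z.2)) * deriv p2 (z.1 - z.2))) =
      (∫ z in Set.Icc (0 : ℝ) π ×ˢ Set.Icc (0 : ℝ) (2 * π),
        (qd (p1 (z.1 + z.2)) * (deriv p1 (z.1 + z.2)) ^ 2 +
          qd (p2 (z.1 - z.2)) * (deriv p2 (z.1 - z.2)) ^ 2)) ∧
    0 ≤ ∫ z in Set.Icc (0 : ℝ) π ×ˢ Set.Icc (0 : ℝ) (2 * π),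
        (qd (p1 (z.1 + z.2)) * (deriv p1 (z.1 + z.2)) ^ 2 +
          qd (p2 (z.1 - z.2)) * (deriv p2 (z.1 - z.2)) ^ 2) := by
  have hqd_meas : Measurable qd := by
    rw [funext hqd]
    exact Measurable.ite (measurableSet_lt measurable_const measurable_abs) measurable_const
      measurable_const
  have hqd_nonneg : ∀ y, 0 ≤ qd y := fun y => by rw [hqd]; split_ifs <;> norm_num
  have hqd_abs : ∀ y, |qd y| ≤ 1 := fun y => by rw [hqd]; split_ifs <;> norm_num
  have hd1 := hp1.continuous_deriv le_rfl
  have hd2 := hp2.continuous_deriv le_rfl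
  obtain ⟨C1, hC1⟩ := hper1.deriv.exists_abs_le_of_continuous Real.pi_ne_zero hd1
  obtain ⟨C2, hC2⟩ := hper2.deriv.exists_abs_le_of_continuous Real.pi_ne_zero hd2
  have hweighted : ∀ u v, |v| ≤ max C1 C2 → |qd u * v| ≤ max C1 C2 := fun u v hv => by
    rw [abs_mul]
    exact (mul_le_of_le_one_left (abs_nonneg _) (hqd_abs u)).trans hv
  have hd1C (y : ℝ) : |deriv p1 y| ≤ max C1 C2 := (hC1 y).trans (le_max_left _ _)
  have hd2C (y : ℝ) : |deriv p2 y| ≤ max C1 C2 := (hC2 y).trans (le_max_right _ _)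
  refine ⟨?_, setIntegral_nonneg (measurableSet_Icc.prod measurableSet_Icc) fun z _ =>
    add_nonneg (mul_nonneg (hqd_nonneg _) (sq_nonneg _)) (mul_nonneg (hqd_nonneg _) (sq_nonneg _))⟩
  rw [setIntegral_Icc_prod_Icc_sub_mul_sub (c := fun y => qd (p1 y) * deriv p1 y)
    (d := fun y => qd (p2 y) * deriv p2 y) Real.pi_pos.le hd1.measurable hd2.measurable
    ((hqd_meas.comp hp1.continuous.measurable).mul hd1.measurable)
    ((hqd_meas.comp hp2.continuous.measurable).mul hd2.measurable)
    hd1C hd2C (fun y => hweighted _ _ (hd1C y)) (fun y => hweighted _ _ (hd2C y))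
    hper1.deriv hper2.deriv ((hper1.comp qd).mul hper1.deriv) ((hper2.comp qd).mul hper2.deriv)
    (hper1.intervalIntegral_deriv_eq_zero hp1) (hper2.intervalIntegral_deriv_eq_zero hp2)]
  congr with z
  ring

/-- With v = p₁(x+t) + p₂(x−t) (p₁, p₂ π-periodic, p₁ of mean zero) and
φ = q(v⁺) + q(v⁻) where q is the truncation at level M (with a.e. derivative
qd ∈ {0,1}), one has ∫_Q v_t φ_t = ∫_Q [qd(v⁺)(v⁺_t)² + qd(v⁻)(v⁻_t)²] ≥ 0. -/
theorem stmt18 (p1 p2 : ℝ → ℝ) (M : ℝ) (hM : 0 ≤ M)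
    (hp1 : ContDiff ℝ 1 p1) (hp2 : ContDiff ℝ 1 p2)
    (hper1 : Function.Periodic p1 π) (hper2 : Function.Periodic p2 π)
    (hmean : (∫ y in Set.Icc (0 : ℝ) π, p1 y) = 0)
    (q qd : ℝ → ℝ)
    (hq : ∀ y : ℝ, q y = if M ≤ y then y - M else if y ≤ -M then y + M else 0)
    (hqd : ∀ y : ℝ, qd y = if M < |y| then 1 else 0) :
    (∫ z in Set.Icc (0 : ℝ) π ×ˢ Set.Icc (0 : ℝ) (2 * π),
        (deriv p1 (z.1 + z.2) - deriv p2 (z.1 - z.2)) *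
          (qd (p1 (z.1 + z.2)) * deriv p1 (z.1 + z.2) -
            qd (p2 (z.1 - z.2)) * deriv p2 (z.1 - z.2))) =
      (∫ z in Set.Icc (0 : ℝ) π ×ˢ Set.Icc (0 : ℝ) (2 * π),
        (qd (p1 (z.1 + z.2)) * (deriv p1 (z.1 + z.2)) ^ 2 +
          qd (p2 (z.1 - z.2)) * (deriv p2 (z.1 - z.2)) ^ 2)) ∧
    0 ≤ ∫ z in Set.Icc (0 : ℝ) π ×ˢ Set.Icc (0 : ℝ) (2 * π),
        (qd (p1 (z.1 + z.2)) * (deriv p1 (z.1 + z.2)) ^ 2 +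
          qd (p2 (z.1 - z.2)) * (deriv p2 (z.1 - z.2)) ^ 2) :=
  stmt18_general p1 p2 M hp1 hp2 hper1 hper2 qd hqd
end

section
/- Let 0 < s < 1 and A ≥ 1, and let f with Fourier support in {2j ≠ ±k} and finite ‖f‖_{E^s}. Then the low-frequency part f_{1,A} = Σ_{2j≠±k, 2|j|+|k| ≤ A} f̂(j,k) e^{2ijx+ikt} satisfies the pointwise bound ‖f_{1,A}‖_{C⁰} ≤ C(s) ‖f‖_{E^s} A^{1−s}. -/
/-!
Cauchy–Schwarz against the weight `|4j² - k²|^s` reduces the bound to the lattice sum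
`∑ |4j² - k²|^(-s)` over `2|j| + |k| ≤ A`, `2j ≠ ±k`. The substitution `u = 2j - k`, `v = 2j + k`
is injective and factors the weight as `|u| |v|` with `0 < |u|, |v| ≤ A`, so the lattice sum is at
most `(∑_{0 < |u| ≤ A} |u|^(-s))² ≤ (2 A^(1-s) / (1-s))²`; the one-dimensional bound telescopes
because weighted AM-GM gives `(1 - s) (n + 1)^(-s) ≤ (n + 1)^(1-s) - n^(1-s)`.
-/

open Finset

lemma rpow_one_sub_add_mul_rpow_neg_le {x s : ℝ} (hx : 0 ≤ x) (hs0 : 0 ≤ s) (hs1 : s ≤ 1) :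
    x ^ (1 - s) + (1 - s) * (x + 1) ^ (-s) ≤ (x + 1) ^ (1 - s) := by
  have hx1 : 0 < x + 1 := by linarith
  have amgm : x ^ (1 - s) * (x + 1) ^ s ≤ (1 - s) * x + s * (x + 1) :=
    Real.geom_mean_le_arith_mean2_weighted (by linarith) hs0 hx hx1.le (by ring)
  have hinv : (x + 1) ^ s * (x + 1) ^ (-s) = 1 := by
    rw [← Real.rpow_add hx1, add_neg_cancel, Real.rpow_zero]
  have hsplit : (x + 1) ^ (1 - s) = (x + 1) * (x + 1) ^ (-s) := by
    rw [sub_eq_add_neg, Real.rpow_add hx1, Real.rpow_one]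
  calc x ^ (1 - s) + (1 - s) * (x + 1) ^ (-s)
      = (x ^ (1 - s) * (x + 1) ^ s + (1 - s)) * (x + 1) ^ (-s) := by
        rw [add_mul, mul_assoc, hinv, mul_one]
    _ ≤ ((1 - s) * x + s * (x + 1) + (1 - s)) * (x + 1) ^ (-s) := by gcongr
    _ = (x + 1) ^ (1 - s) := by rw [hsplit]; ring

lemma sum_abs_rpow_neg_Icc_erase_zero_le {s : ℝ} (hs0 : 0 ≤ s) (hs1 : s < 1) (N : ℕ) :
    ∑ u ∈ (Icc (-(N : ℤ)) N).erase 0, |(u : ℝ)| ^ (-s) ≤ 2 * ((N : ℝ) ^ (1 - s) / (1 - s)) := by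
  have hs : 0 < 1 - s := by linarith
  induction N with
  | zero => simp [Real.zero_rpow hs.ne']
  | succ N ih =>
    have hIcc : (Icc (-((N + 1 : ℕ) : ℤ)) (N + 1 : ℕ)).erase 0 =
        insert (-((N : ℤ) + 1)) (insert ((N : ℤ) + 1) ((Icc (-(N : ℤ)) N).erase 0)) := by
      ext u; simp only [mem_erase, mem_Icc, mem_insert]; omega
    have step := rpow_one_sub_add_mul_rpow_neg_le (Nat.cast_nonneg N) hs0 hs1.le
    rw [hIcc, sum_insert (by simp only [mem_insert, mem_erase, mem_Icc]; omega),
      sum_insert (by simp)]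
    push_cast
    rw [abs_neg, abs_of_pos (by positivity)]
    have : (N : ℝ) ^ (1 - s) / (1 - s) + (N + 1) ^ (-s) ≤ (N + 1) ^ (1 - s) / (1 - s) := by
      rw [div_add' _ _ _ hs.ne', div_le_div_iff_of_pos_right hs]
      linarith
    linarith

lemma sum_abs_rpow_neg_Icc_floor_erase_zero_le {s A : ℝ} (hs0 : 0 ≤ s) (hs1 : s < 1)
    (hA : 0 ≤ A) :
    ∑ u ∈ (Icc (-⌊A⌋) ⌊A⌋).erase 0, |(u : ℝ)| ^ (-s) ≤ 2 * (A ^ (1 - s) / (1 - s)) := by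
  rw [← Int.natCast_floor_eq_floor hA]
  refine (sum_abs_rpow_neg_Icc_erase_zero_le hs0 hs1 ⌊A⌋₊).trans ?_
  gcongr
  exact Nat.floor_le hA

/-- The box only makes the set finite: it contains every `(j, k)` with `2|j| + |k| ≤ A`. -/
noncomputable def lowFreq (A : ℝ) : Finset (ℤ × ℤ) :=
  (Icc (-⌊A⌋, -⌊A⌋) (⌊A⌋, ⌊A⌋)).filter fun jk =>
    ((2 * |jk.1| + |jk.2| : ℤ) : ℝ) ≤ A ∧ ¬(2 * jk.1 = jk.2 ∨ 2 * jk.1 = -jk.2)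

lemma mem_lowFreq {A : ℝ} {jk : ℤ × ℤ} :
    jk ∈ lowFreq A ↔
      ((2 * |jk.1| + |jk.2| : ℤ) : ℝ) ≤ A ∧ ¬(2 * jk.1 = jk.2 ∨ 2 * jk.1 = -jk.2) := by
  rw [lowFreq, mem_filter, and_iff_right_iff_imp, ← Int.le_floor]
  rintro ⟨h, -⟩
  rw [mem_Icc, Prod.le_def, Prod.le_def]
  have := abs_le.1 (show |jk.1| ≤ ⌊A⌋ by linarith [abs_nonneg jk.1, abs_nonneg jk.2])
  have := abs_le.1 (show |jk.2| ≤ ⌊A⌋ by linarith [abs_nonneg jk.1, abs_nonneg jk.2])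
  simp only
  omega

lemma abs_four_mul_sq_sub_sq (j k : ℤ) : |4 * j ^ 2 - k ^ 2| = |2 * j - k| * |2 * j + k| := by
  rw [← abs_mul]; ring_nf

lemma sum_lowFreq_abs_four_mul_sq_sub_sq_rpow_neg_le {s A : ℝ} (hs0 : 0 ≤ s) (hs1 : s < 1)
    (hA : 0 ≤ A) :
    ∑ jk ∈ lowFreq A, ((|4 * jk.1 ^ 2 - jk.2 ^ 2| : ℤ) : ℝ) ^ (-s) ≤
      (2 * (A ^ (1 - s) / (1 - s))) ^ 2 := by
  set I := (Icc (-⌊A⌋) ⌊A⌋).erase 0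
  set q : ℤ → ℝ := fun u => |(u : ℝ)| ^ (-s)
  set φ : ℤ × ℤ → ℤ × ℤ := fun jk => (2 * jk.1 - jk.2, 2 * jk.1 + jk.2)
  have hφ_inj : Set.InjOn φ (lowFreq A) := by
    intro jk _ jk' _ h
    simp only [φ, Prod.mk.injEq] at h
    ext <;> omega
  have hφ_maps : ∀ jk ∈ lowFreq A, φ jk ∈ I ×ˢ I := by
    intro jk hjk
    obtain ⟨hle, hres⟩ := mem_lowFreq.1 hjk
    rw [← Int.le_floor] at hle
    have h1 := abs_sub (2 * jk.1) jk.2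
    have h2 := abs_add_le (2 * jk.1) jk.2
    rw [abs_mul, abs_two] at h1 h2
    have := abs_le.1 (h1.trans hle)
    have := abs_le.1 (h2.trans hle)
    simp only [I, φ, mem_product, mem_erase, mem_Icc]
    omega
  calc ∑ jk ∈ lowFreq A, ((|4 * jk.1 ^ 2 - jk.2 ^ 2| : ℤ) : ℝ) ^ (-s)
      = ∑ jk ∈ lowFreq A, q (φ jk).1 * q (φ jk).2 := by
        refine sum_congr rfl fun jk _ => ?_
        rw [abs_four_mul_sq_sub_sq]
        simp only [q, φ]
        push_cast
        exact Real.mul_rpow (abs_nonneg _) (abs_nonneg _)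
    _ = ∑ uv ∈ (lowFreq A).image φ, q uv.1 * q uv.2 := by rw [sum_image hφ_inj]
    _ ≤ ∑ uv ∈ I ×ˢ I, q uv.1 * q uv.2 :=
        sum_le_sum_of_subset_of_nonneg (image_subset_iff.2 hφ_maps)
          fun _ _ _ => by positivity
    _ = (∑ u ∈ I, q u) ^ 2 := by rw [sum_product, sq, sum_mul_sum]
    _ ≤ (2 * (A ^ (1 - s) / (1 - s))) ^ 2 := by
        gcongr
        exact sum_abs_rpow_neg_Icc_floor_erase_zero_le hs0 hs1 hA

lemma sum_le_sqrt_sum_rpow_neg_mul_sqrt_sum_rpow_mul_sq {ι : Type*} (S : Finset ι) (w a : ι → ℝ)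
    (s : ℝ) (hw : ∀ i ∈ S, 0 < w i) :
    ∑ i ∈ S, a i ≤ √(∑ i ∈ S, w i ^ (-s)) * √(∑ i ∈ S, w i ^ s * a i ^ 2) := by
  rw [← Real.sqrt_mul (sum_nonneg fun i hi => (Real.rpow_pos_of_pos (hw i hi) _).le)]
  refine Real.le_sqrt_of_sq_le (sum_sq_le_sum_mul_sum_of_sq_le_mul S
    (fun i hi => (Real.rpow_pos_of_pos (hw i hi) _).le)
    (fun i hi => mul_nonneg (Real.rpow_pos_of_pos (hw i hi) _).le (sq_nonneg _))
    fun i hi => le_of_eq ?_)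
  rw [← mul_assoc, ← Real.rpow_add (hw i hi), neg_add_cancel, Real.rpow_zero, one_mul]

lemma tsum_ite_mul_eq_sum_lowFreq {A : ℝ} {fhat : ℤ × ℤ → ℂ} (g : ℤ × ℤ → ℂ)
    (hvan : ∀ jk : ℤ × ℤ, (2 * jk.1 = jk.2 ∨ 2 * jk.1 = -jk.2) → fhat jk = 0) :
    ∑' jk : ℤ × ℤ, (if ((2 * |jk.1| + |jk.2| : ℤ) : ℝ) ≤ A then fhat jk else 0) * g jk =
      ∑ jk ∈ lowFreq A, fhat jk * g jk := by
  rw [tsum_eq_sum (s := lowFreq A)]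
  · exact sum_congr rfl fun jk hjk => by rw [if_pos (mem_lowFreq.1 hjk).1]
  · intro jk hjk
    rw [mem_lowFreq, not_and, not_not] at hjk
    split_ifs with hA
    · rw [hvan jk (hjk hA), zero_mul]
    · rw [zero_mul]

/-- Pointwise bound on the low-frequency part: for 0 < s < 1 there is C(s) with
‖f_{1,A}‖_{C⁰} ≤ C(s)·‖f‖_{E^s}·A^{1−s} for all A ≥ 1, where
f_{1,A} = Σ_{2j≠±k, 2|j|+|k| ≤ A} f̂(j,k)e^{2ijx+ikt}. -/
theorem stmt19 (s : ℝ) (hs0 : 0 < s) (hs1 : s < 1) :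
    ∃ C : ℝ, 0 < C ∧ ∀ A : ℝ, 1 ≤ A → ∀ (fhat : ℤ × ℤ → ℂ),
      (∀ jk : ℤ × ℤ, (2 * jk.1 = jk.2 ∨ 2 * jk.1 = -jk.2) → fhat jk = 0) →
      Summable (fun jk : ℤ × ℤ =>
        ((|4 * jk.1 ^ 2 - jk.2 ^ 2| : ℤ) : ℝ) ^ s * ‖fhat jk‖ ^ 2) →
      ∀ x t : ℝ,
        ‖∑' jk : ℤ × ℤ, (if ((2 * |jk.1| + |jk.2| : ℤ) : ℝ) ≤ A then fhat jk else 0) *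
            Complex.exp (Complex.I * ((2 * (jk.1 : ℝ) * x + (jk.2 : ℝ) * t : ℝ) : ℂ))‖ ≤
          C * (∑' jk : ℤ × ℤ,
            ((|4 * jk.1 ^ 2 - jk.2 ^ 2| : ℤ) : ℝ) ^ s * ‖fhat jk‖ ^ 2) ^ (1 / 2 : ℝ) *
            A ^ (1 - s) := by
  have hs : 0 < 1 - s := sub_pos.2 hs1
  refine ⟨2 / (1 - s), by positivity, fun A hA fhat hvan hsum x t => ?_⟩
  set w : ℤ × ℤ → ℝ := fun jk => ((|4 * jk.1 ^ 2 - jk.2 ^ 2| : ℤ) : ℝ)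
  have hw : ∀ jk ∈ lowFreq A, 0 < w jk := fun jk hjk => by
    obtain ⟨hu, hv⟩ := not_or.1 (mem_lowFreq.1 hjk).2
    refine Int.cast_pos.2 ?_
    rw [abs_four_mul_sq_sub_sq]
    exact mul_pos (abs_pos.2 (by omega)) (abs_pos.2 (by omega))
  have hK : 0 ≤ 2 * (A ^ (1 - s) / (1 - s)) := by positivity
  rw [tsum_ite_mul_eq_sum_lowFreq _ hvan, ← Real.sqrt_eq_rpow]
  calc _ ≤ ∑ jk ∈ lowFreq A, ‖fhat jk‖ := norm_sum_le_of_le _ fun jk _ => by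
        rw [norm_mul, Complex.norm_exp_I_mul_ofReal, mul_one]
    _ ≤ √(∑ jk ∈ lowFreq A, w jk ^ (-s)) * √(∑ jk ∈ lowFreq A, w jk ^ s * ‖fhat jk‖ ^ 2) :=
        sum_le_sqrt_sum_rpow_neg_mul_sqrt_sum_rpow_mul_sq _ _ _ s hw
    _ ≤ 2 * (A ^ (1 - s) / (1 - s)) * √(∑' jk, w jk ^ s * ‖fhat jk‖ ^ 2) := by
        gcongr
        · exact (Real.sqrt_le_sqrt (sum_lowFreq_abs_four_mul_sq_sub_sq_rpow_neg_le hs0.le hs1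
            (by linarith))).trans_eq (Real.sqrt_sq hK)
        · exact hsum.sum_le_tsum _ fun jk _ => by positivity
    _ = _ := by ring
end
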